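/- Let X, Y, Z be random variables each uniformly distributed on (0,1), such that (X, Y) is counter-monotonic and (1/X + 1/Y, Z) is counter-monotonic. Define φ : ℝ³ → ℝ by φ(x, y, z) = (1/x)·1_{0<x<1} + (1/y)·1_{0<y<1} − (2/z)·1_{0<z<1}. Then φ is supermodular, E[φ(X, Y, Z)] = 2 log 2, and for any comonotonic random vector (X', Y', Z') with standard uniform marginals, φ(X', Y', Z') = 0 almost surely, so E[φ(X', Y', Z')] = 0 < E[φ(X, Y, Z)]. -/

import Mathlib

open MeasureTheory ProbabilityTheory

/-- A measure is atomless: every set of positive measure has a measurable subset of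
strictly smaller positive measure. -/
def Atomless {Ω : Type*} {mΩ : MeasurableSpace Ω} (μ : Measure Ω) : Prop :=
  ∀ s : Set Ω, MeasurableSet s → 0 < μ s →
    ∃ t : Set Ω, MeasurableSet t ∧ t ⊆ s ∧ 0 < μ t ∧ μ t < μ s

/-- Integral of the positive part, in `ℝ≥0∞`. -/
noncomputable def posPartInt {Ω : Type*} {mΩ : MeasurableSpace Ω} (μ : Measure Ω)
    (Z : Ω → ℝ) : ENNReal :=
  ∫⁻ ω, ENNReal.ofReal (Z ω) ∂μ

/-- The expectation `E[Z] = E[Z₊] - E[Z₋]`, valued in `[-∞, ∞]`. -/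
noncomputable def eexp {Ω : Type*} {mΩ : MeasurableSpace Ω} (μ : Measure Ω)
    (Z : Ω → ℝ) : EReal :=
  (posPartInt μ Z : EReal) - (posPartInt μ (fun ω => -Z ω) : EReal)

/-- `E[Z]` is well-defined: `E[Z₊] < ∞` or `E[Z₋] < ∞`. -/
def WellDef {Ω : Type*} {mΩ : MeasurableSpace Ω} (μ : Measure Ω) (Z : Ω → ℝ) : Prop :=
  posPartInt μ Z ≠ ⊤ ∨ posPartInt μ (fun ω => -Z ω) ≠ ⊤

/-- `E[Z]` is finite: `E[Z₊] < ∞` and `E[Z₋] < ∞`. -/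
def FiniteExp {Ω : Type*} {mΩ : MeasurableSpace Ω} (μ : Measure Ω) (Z : Ω → ℝ) : Prop :=
  posPartInt μ Z ≠ ⊤ ∧ posPartInt μ (fun ω => -Z ω) ≠ ⊤

/-- Convex order: `E[u(X)] ≤ E[u(Y)]` for every convex `u` such that both
expectations are well-defined. -/
def ConvexOrd {Ω : Type*} {mΩ : MeasurableSpace Ω} (μ : Measure Ω) (X Y : Ω → ℝ) : Prop :=
  ∀ u : ℝ → ℝ, ConvexOn ℝ Set.univ u →
    WellDef μ (fun ω => u (X ω)) → WellDef μ (fun ω => u (Y ω)) →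
    eexp μ (fun ω => u (X ω)) ≤ eexp μ (fun ω => u (Y ω))

/-- †convex order: `E[u(X)] ≤ E[u(Y)]` for every convex `u` such that both
expectations are finite. -/
def DaggerConvexOrd {Ω : Type*} {mΩ : MeasurableSpace Ω} (μ : Measure Ω) (X Y : Ω → ℝ) : Prop :=
  ∀ u : ℝ → ℝ, ConvexOn ℝ Set.univ u →
    FiniteExp μ (fun ω => u (X ω)) → FiniteExp μ (fun ω => u (Y ω)) →
    eexp μ (fun ω => u (X ω)) ≤ eexp μ (fun ω => u (Y ω))

/-- `(X, Y)` is comonotonic. -/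
def Comonotone {Ω : Type*} {mΩ : MeasurableSpace Ω} (μ : Measure Ω) (X Y : Ω → ℝ) : Prop :=
  ∃ (Z : Ω → ℝ) (f g : ℝ → ℝ), Measurable Z ∧ Monotone f ∧ Monotone g ∧
    X =ᵐ[μ] (fun ω => f (Z ω)) ∧ Y =ᵐ[μ] (fun ω => g (Z ω))

/-- `(X, Y)` is counter-monotonic: `(X, -Y)` is comonotonic. -/
def CounterMonotone {Ω : Type*} {mΩ : MeasurableSpace Ω} (μ : Measure Ω) (X Y : Ω → ℝ) : Prop :=
  Comonotone μ X (fun ω => -Y ω)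


/-- A function `φ : ℝ^d → ℝ` is supermodular if
`φ x + φ y ≤ φ (x ⊓ y) + φ (x ⊔ y)` for all `x, y`. -/
def Supermodular {d : ℕ} (φ : (Fin d → ℝ) → ℝ) : Prop :=
  ∀ x y : Fin d → ℝ, φ x + φ y ≤ φ (x ⊓ y) + φ (x ⊔ y)

/-- The function `φ(x,y,z) = (1/x)1_{0<x<1} + (1/y)1_{0<y<1} - (2/z)1_{0<z<1}`. -/
noncomputable def exPhi (x y z : ℝ) : ℝ :=
  (if 0 < x ∧ x < 1 then 1 / x else 0) + (if 0 < y ∧ y < 1 then 1 / y else 0)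
    - (if 0 < z ∧ z < 1 then 2 / z else 0)

namespace SupermodularEx
open MeasureTheory ProbabilityTheory Set intervalIntegral

/-- comonotone random variables with the same (finite-mass) law are a.e. equal. -/
lemma comon_ae_eq {Ω : Type*} [MeasurableSpace Ω] {μ : Measure Ω} [IsProbabilityMeasure μ]
    {U V : Ω → ℝ} (hU : Measurable U) (hV : Measurable V)
    (h : Comonotone μ U V) (hlaw : Measure.map U μ = Measure.map V μ) : U =ᵐ[μ] V := by
  obtain ⟨W, f, g, hW, hf, hg, hUf, hVg⟩ := h
  have key : ∀ q : ℚ, ∀ᵐ ω ∂μ, (f (W ω) ≤ q ↔ g (W ω) ≤ q) := by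
    intro q
    set A : Set Ω := W ⁻¹' (f ⁻¹' Set.Iic (q:ℝ)) with hA
    set B : Set Ω := W ⁻¹' (g ⁻¹' Set.Iic (q:ℝ)) with hB
    have hAm : MeasurableSet A := hW (hf.measurable measurableSet_Iic)
    have hBm : MeasurableSet B := hW (hg.measurable measurableSet_Iic)
    have hls : ∀ (h' : ℝ → ℝ), Monotone h' → IsLowerSet (h' ⁻¹' Set.Iic (q:ℝ)) := by
      intro h' hh' a b hab hb
      exact le_trans (hh' hab) hb
    have htot : A ⊆ B ∨ B ⊆ A := by
      rcases (hls f hf).total (hls g hg) with h1 | h1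
      · exact Or.inl (Set.preimage_mono h1)
      · exact Or.inr (Set.preimage_mono h1)
    have hAe : μ A = μ {ω | U ω ≤ (q:ℝ)} := by
      refine measure_congr ?_ |>.symm
      filter_upwards [hUf] with ω hω
      show ((U ω ≤ (q:ℝ)) = (ω ∈ A))
      simp only [hA, Set.mem_preimage, Set.mem_Iic, hω]
    have hBe : μ B = μ {ω | V ω ≤ (q:ℝ)} := by
      refine measure_congr ?_ |>.symm
      filter_upwards [hVg] with ω hω
      show ((V ω ≤ (q:ℝ)) = (ω ∈ B))
      simp only [hB, Set.mem_preimage, Set.mem_Iic, hω]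
    have hUV : μ {ω | U ω ≤ (q:ℝ)} = μ {ω | V ω ≤ (q:ℝ)} := by
      have h1 : μ {ω | U ω ≤ (q:ℝ)} = Measure.map U μ (Set.Iic (q:ℝ)) := by
        rw [Measure.map_apply hU measurableSet_Iic]; rfl
      have h2 : μ {ω | V ω ≤ (q:ℝ)} = Measure.map V μ (Set.Iic (q:ℝ)) := by
        rw [Measure.map_apply hV measurableSet_Iic]; rfl
      rw [h1, h2, hlaw]
    have hAB : μ A = μ B := by rw [hAe, hBe, hUV]
    have hnull : μ ((A \ B) ∪ (B \ A)) = 0 := by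
      rcases htot with h1 | h1
      · have : μ (B \ A) = 0 := by
          have := measure_diff h1 hAm.nullMeasurableSet (measure_ne_top μ A)
          rw [this, hAB, tsub_self]
        rw [Set.diff_eq_empty.mpr h1, Set.empty_union]; exact this
      · have : μ (A \ B) = 0 := by
          have := measure_diff h1 hBm.nullMeasurableSet (measure_ne_top μ B)
          rw [this, hAB, tsub_self]
        rw [Set.diff_eq_empty.mpr h1, Set.union_empty]; exact this
    rw [ae_iff]
    refine measure_mono_null ?_ hnull
    intro ω hω
    simp only [Set.mem_setOf_eq] at hω
    have hωA : (ω ∈ A) = (f (W ω) ≤ (q:ℝ)) := rfl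
    have hωB : (ω ∈ B) = (g (W ω) ≤ (q:ℝ)) := rfl
    simp only [Set.mem_union, Set.mem_diff, hωA, hωB]
    tauto
  have hall : ∀ᵐ ω ∂μ, ∀ q : ℚ, (f (W ω) ≤ q ↔ g (W ω) ≤ q) := ae_all_iff.mpr key
  filter_upwards [hall, hUf, hVg] with ω hq hu hv
  rw [hu, hv]
  by_contra hne
  rcases lt_or_gt_of_ne hne with hlt | hlt
  · obtain ⟨q, hq1, hq2⟩ := exists_rat_btwn hlt
    exact absurd ((hq q).mp hq1.le) (not_le.mpr hq2)
  · obtain ⟨q, hq1, hq2⟩ := exists_rat_btwn hlt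
    exact absurd ((hq q).mpr hq1.le) (not_le.mpr hq2)

lemma map_reflect : Measure.map (fun x : ℝ => 1 - x) (volume.restrict (Ioo (0:ℝ) 1))
    = volume.restrict (Ioo (0:ℝ) 1) := by
  have hpre : (fun x : ℝ => 1 - x) ⁻¹' (Ioo (0:ℝ) 1) = Ioo (0:ℝ) 1 := by
    ext x; simp only [mem_preimage, mem_Ioo]; constructor <;> (rintro ⟨h1, h2⟩; constructor <;> linarith)
  have hmeas : Measurable (fun x : ℝ => 1 - x) := measurable_const.sub measurable_id
  rw [← hpre, ← Measure.restrict_map hmeas measurableSet_Ioo,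
    (Measure.measurePreserving_sub_left volume 1).map_eq, hpre]

lemma map_half (c : ℝ) (hc : Continuous (fun x : ℝ => c - 2*x)) :
    Measure.map (fun x : ℝ => c - 2*x) volume = ENNReal.ofReal 2⁻¹ • volume := by
  have h1 : (fun x : ℝ => c - 2*x) = (fun y : ℝ => c - y) ∘ (fun x : ℝ => 2 * x) := rfl
  rw [h1, ← Measure.map_map (f := fun x : ℝ => 2*x) (g := fun y : ℝ => c - y) (by fun_prop) (by fun_prop),
    Real.map_volume_mul_left two_ne_zero, Measure.map_smul,
    (Measure.measurePreserving_sub_left volume c).map_eq]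
  norm_num [abs_of_nonneg]

lemma map_abs : Measure.map (fun x : ℝ => |1 - 2*x|) (volume.restrict (Ioo (0:ℝ) 1))
    = volume.restrict (Ioo (0:ℝ) 1) := by
  have hsplit : Ioo (0:ℝ) 1 = Ioc (0:ℝ) 2⁻¹ ∪ Ioo (2⁻¹:ℝ) 1 :=
    (Set.Ioc_union_Ioo_eq_Ioo (by norm_num) (by norm_num)).symm
  have hdisj : Disjoint (Ioc (0:ℝ) 2⁻¹) (Ioo (2⁻¹:ℝ) 1) := by
    apply Set.disjoint_left.mpr
    rintro x ⟨_, h2⟩ ⟨h3, _⟩; linarith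
  have habs : Measurable (fun x : ℝ => |1 - 2*x|) :=
    (measurable_const.sub (measurable_const_mul 2)).abs
  conv_lhs => rw [hsplit]
  rw [Measure.restrict_union hdisj measurableSet_Ioo, Measure.map_add _ _ habs]
  -- first piece
  have e1 : Measure.map (fun x : ℝ => |1 - 2*x|) (volume.restrict (Ioc (0:ℝ) 2⁻¹))
      = (ENNReal.ofReal 2⁻¹) • volume.restrict (Ico (0:ℝ) 1) := by
    have hcong : Measure.map (fun x : ℝ => |1 - 2*x|) (volume.restrict (Ioc (0:ℝ) 2⁻¹))
        = Measure.map (fun x : ℝ => 1 - 2*x) (volume.restrict (Ioc (0:ℝ) 2⁻¹)) := by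
      apply Measure.map_congr
      filter_upwards [ae_restrict_mem measurableSet_Ioc] with x hx
      rw [abs_of_nonneg]; rcases hx with ⟨_, h2⟩; linarith
    have hpre : (fun x : ℝ => 1 - 2*x) ⁻¹' (Ico (0:ℝ) 1) = Ioc (0:ℝ) 2⁻¹ := by
      ext x; simp only [mem_preimage, mem_Ico, mem_Ioc]
      constructor <;> (rintro ⟨h1, h2⟩; constructor <;> linarith)
    rw [hcong, ← hpre, ← Measure.restrict_map (by fun_prop : Measurable (fun x : ℝ => 1 - 2*x))
      measurableSet_Ico, map_half 1 (by continuity), Measure.restrict_smul]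
  have e2 : Measure.map (fun x : ℝ => |1 - 2*x|) (volume.restrict (Ioo (2⁻¹:ℝ) 1))
      = (ENNReal.ofReal 2⁻¹) • volume.restrict (Ioo (0:ℝ) 1) := by
    have hcong : Measure.map (fun x : ℝ => |1 - 2*x|) (volume.restrict (Ioo (2⁻¹:ℝ) 1))
        = Measure.map (fun x : ℝ => (-1) - 2*(-x)) (volume.restrict (Ioo (2⁻¹:ℝ) 1)) := by
      apply Measure.map_congr
      filter_upwards [ae_restrict_mem measurableSet_Ioo] with x hx
      rcases hx with ⟨h1, _⟩
      rw [abs_of_nonpos (by linarith)]; ring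
    have hpre : (fun x : ℝ => (-1) - 2*(-x)) ⁻¹' (Ioo (0:ℝ) 1) = Ioo (2⁻¹:ℝ) 1 := by
      ext x; simp only [mem_preimage, mem_Ioo]
      constructor <;> (rintro ⟨h1, h2⟩; constructor <;> linarith)
    have hm : Measurable (fun x : ℝ => (-1:ℝ) - 2*(-x)) := by fun_prop
    have hmap : Measure.map (fun x : ℝ => (-1:ℝ) - 2*(-x)) volume = ENNReal.ofReal 2⁻¹ • volume := by
      have h1 : (fun x : ℝ => (-1:ℝ) - 2*(-x)) = (fun y : ℝ => (-1:ℝ) - 2*y) ∘ (fun x : ℝ => -x) := by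
        funext x; simp
      rw [h1, ← Measure.map_map (f := fun x : ℝ => -x) (g := fun y : ℝ => (-1:ℝ) - 2*y) (by fun_prop) (by fun_prop),
        Measure.measurePreserving_neg volume |>.map_eq, map_half (-1) (by continuity)]
    rw [hcong, ← hpre, ← Measure.restrict_map hm measurableSet_Ioo, hmap, Measure.restrict_smul]
  rw [e1, e2, Measure.restrict_congr_set Ioo_ae_eq_Ico.symm, ← add_smul]
  have : ENNReal.ofReal 2⁻¹ + ENNReal.ofReal 2⁻¹ = 1 := by
    rw [← ENNReal.ofReal_add (by norm_num) (by norm_num)]; norm_num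
  rw [this, one_smul]

lemma fmax_half (x : ℝ) : (2:ℝ)⁻¹ ≤ max x (1-x) := by
  rcases le_total x (1-x) with h | h
  · rw [max_eq_right h]; linarith
  · rw [max_eq_left h]; linarith

lemma fmax_cont : Continuous (fun x : ℝ => (max x (1-x))⁻¹) := by
  apply Continuous.inv₀ (continuous_id.max (continuous_const.sub continuous_id))
  intro x
  simp only [id_eq]
  have := fmax_half x
  intro hc; have hc' : max x (1 - x) = 0 := hc; rw [hc'] at this; norm_num at this

lemma integral_fmax : ∫ x in Set.Ioo (0:ℝ) 1, (max x (1-x))⁻¹ = 2 * Real.log 2 := by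
  have hio : ∫ x in Set.Ioo (0:ℝ) 1, (max x (1-x))⁻¹
      = ∫ x in (0:ℝ)..1, (max x (1-x))⁻¹ := by
    rw [intervalIntegral.integral_of_le (by norm_num), ← integral_Ioc_eq_integral_Ioo]
  rw [hio, ← intervalIntegral.integral_add_adjacent_intervals
    (b := (2⁻¹:ℝ)) (fmax_cont.intervalIntegrable _ _) (fmax_cont.intervalIntegrable _ _)]
  have h1 : ∫ x in (0:ℝ)..2⁻¹, (max x (1-x))⁻¹ = Real.log 2 := by
    have : ∀ x ∈ Set.uIcc (0:ℝ) 2⁻¹, (max x (1-x))⁻¹ = (fun y : ℝ => y⁻¹) (1 - x) := by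
      intro x hx
      rw [Set.uIcc_of_le (by norm_num)] at hx
      rcases hx with ⟨ha, hb⟩
      rw [max_eq_right (by linarith)]
    rw [intervalIntegral.integral_congr this, intervalIntegral.integral_comp_sub_left
      (fun y : ℝ => y⁻¹) 1]
    norm_num
  have h2 : ∫ x in (2⁻¹:ℝ)..1, (max x (1-x))⁻¹ = Real.log 2 := by
    have : ∀ x ∈ Set.uIcc (2⁻¹:ℝ) 1, (max x (1-x))⁻¹ = x⁻¹ := by
      intro x hx
      rw [Set.uIcc_of_le (by norm_num)] at hx
      rcases hx with ⟨ha, hb⟩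
      rw [max_eq_left (by linarith)]
    rw [intervalIntegral.integral_congr this, integral_inv (by
      rw [Set.uIcc_of_le (by norm_num)]; rintro ⟨h1, h2⟩; norm_num at h1)]
    norm_num
  rw [h1, h2]; ring

lemma lint_fmax : ∫⁻ x in Set.Ioo (0:ℝ) 1, ENNReal.ofReal ((max x (1-x))⁻¹)
    = ENNReal.ofReal (2 * Real.log 2) := by
  rw [← MeasureTheory.ofReal_integral_eq_lintegral_ofReal, integral_fmax]
  · exact Integrable.mono' (integrable_const 2) fmax_cont.aestronglyMeasurable
      (by filter_upwards [] with x
          rw [Real.norm_eq_abs, abs_of_nonneg (inv_nonneg.mpr (le_trans (by norm_num) (fmax_half x)))]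
          calc (max x (1-x))⁻¹ ≤ ((2:ℝ)⁻¹)⁻¹ := by
                apply inv_anti₀ (by norm_num) (fmax_half x)
          _ = 2 := by norm_num)
  · filter_upwards [] with x
    exact inv_nonneg.mpr (le_trans (by norm_num) (fmax_half x))

lemma pair_min_max (h : ℝ → ℝ) (a b : ℝ) : h (a ⊓ b) + h (a ⊔ b) = h a + h b := by
  rcases le_total a b with hab | hab
  · rw [inf_of_le_left hab, sup_of_le_right hab]
  · rw [inf_of_le_right hab, sup_of_le_left hab]; ring

lemma exPhi_diag (x : ℝ) : exPhi x x x = 0 := by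
  unfold exPhi
  split_ifs <;> ring

lemma exPhi_val {x : ℝ} (hx : x ∈ Set.Ioo (0:ℝ) 1) (hne : x ≠ 2⁻¹) :
    exPhi x (1-x) (1 - |1-2*x|) = (max x (1-x))⁻¹ := by
  obtain ⟨hx0, hx1⟩ := hx
  unfold exPhi
  rcases le_total x (1-x) with h | h
  · have hlt : x < 2⁻¹ := lt_of_le_of_ne (by linarith) hne
    rw [abs_of_nonneg (by linarith)]
    rw [if_pos ⟨hx0, hx1⟩, if_pos ⟨by linarith, by linarith⟩,
      if_pos ⟨by linarith, by linarith⟩, max_eq_right h]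
    have h2x : (2:ℝ) / (1 - (1 - 2*x)) = 1 / x := by
      rw [show (1:ℝ) - (1 - 2*x) = 2*x by ring]
      rw [div_eq_div_iff (by linarith) (by linarith)]; ring
    rw [h2x, one_div]; ring
  · have hlt : 2⁻¹ < x := lt_of_le_of_ne (by linarith) (Ne.symm hne)
    rw [abs_of_nonpos (by linarith)]
    rw [if_pos ⟨hx0, hx1⟩, if_pos ⟨by linarith, by linarith⟩,
      if_pos ⟨by linarith, by linarith⟩, max_eq_left h]
    have h2x : (2:ℝ) / (1 - -(1 - 2*x)) = 1 / (1-x) := by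
      rw [show (1:ℝ) - -(1 - 2*x) = 2*(1-x) by ring]
      rw [div_eq_div_iff (by linarith) (by linarith)]; ring
    rw [h2x, one_div]; ring

noncomputable def mfun (w : ℝ) : ℝ := if w < 4 then 0 else Real.sqrt (1 - 4/w)

lemma mfun_mono : Monotone mfun := by
  intro a b hab
  unfold mfun
  by_cases ha : a < 4
  · rw [if_pos ha]
    by_cases hb : b < 4
    · rw [if_pos hb]
    · rw [if_neg hb]; exact Real.sqrt_nonneg _
  · rw [if_neg ha, if_neg (by push_neg at ha ⊢; linarith)]
    push_neg at ha
    apply Real.sqrt_le_sqrt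
    have h4a : (0:ℝ) < a := by linarith
    have h4b : (0:ℝ) < b := by linarith
    have : 4 / b ≤ 4 / a := by
      apply div_le_div_of_nonneg_left (by norm_num) h4a hab
    linarith

lemma mfun_val {x : ℝ} (hx : x ∈ Set.Ioo (0:ℝ) 1) :
    mfun (x⁻¹ + (1-x)⁻¹) = |1 - 2*x| := by
  obtain ⟨hx0, hx1⟩ := hx
  have h1x : (0:ℝ) < 1 - x := by linarith
  have hprod : 0 < x * (1-x) := mul_pos hx0 h1x
  have hW : x⁻¹ + (1-x)⁻¹ = (x * (1-x))⁻¹ := by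
    field_simp
    ring
  have hq : 1 - 4*(x*(1-x)) = (1-2*x)^2 := by ring
  have hquarter : 4*(x*(1-x)) ≤ 1 := by nlinarith [sq_nonneg (1-2*x)]
  have hWge : (4:ℝ) ≤ (x * (1-x))⁻¹ := by
    rw [le_inv_comm₀ (by norm_num) hprod]
    linarith
  rw [hW]
  unfold mfun
  rw [if_neg (not_lt.mpr hWge)]
  have : 4 / (x * (1-x))⁻¹ = 4*(x*(1-x)) := by
    field_simp
  rw [this, hq, Real.sqrt_sq_eq_abs]

end SupermodularEx

open SupermodularEx in
/-- Example 1 of the paper: with `X, Y, Z` uniform on `(0,1)`, `(X, Y)`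
counter-monotonic and `(1/X + 1/Y, Z)` counter-monotonic, the function `φ = exPhi` is
supermodular, `E[φ(X,Y,Z)] = 2 log 2`, while for any comonotonic `(X', Y', Z')` with
standard uniform marginals, `φ(X',Y',Z') = 0` a.s., so
`E[φ(X',Y',Z')] = 0 < E[φ(X,Y,Z)]`. -/
theorem supermodular_counterexample
    {Ω : Type*} [MeasurableSpace Ω] (μ : Measure Ω) [IsProbabilityMeasure μ]
    (hμ : Atomless μ) (X Y Z : Ω → ℝ)
    (hX : Measurable X) (hY : Measurable Y) (hZ : Measurable Z)
    (hXu : Measure.map X μ = volume.restrict (Set.Ioo (0:ℝ) 1))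
    (hYu : Measure.map Y μ = volume.restrict (Set.Ioo (0:ℝ) 1))
    (hZu : Measure.map Z μ = volume.restrict (Set.Ioo (0:ℝ) 1))
    (hXY : CounterMonotone μ X Y)
    (hWZ : CounterMonotone μ (fun ω => (X ω)⁻¹ + (Y ω)⁻¹) Z) :
    Supermodular (fun v : Fin 3 → ℝ => exPhi (v 0) (v 1) (v 2)) ∧
    eexp μ (fun ω => exPhi (X ω) (Y ω) (Z ω)) = ((2 * Real.log 2 : ℝ) : EReal) ∧
    (∀ X' Y' Z' : Ω → ℝ, Measurable X' → Measurable Y' → Measurable Z' →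
      Comonotone μ X' Y' → Comonotone μ X' Z' → Comonotone μ Y' Z' →
      Measure.map X' μ = volume.restrict (Set.Ioo (0:ℝ) 1) →
      Measure.map Y' μ = volume.restrict (Set.Ioo (0:ℝ) 1) →
      Measure.map Z' μ = volume.restrict (Set.Ioo (0:ℝ) 1) →
      (∀ᵐ ω ∂μ, exPhi (X' ω) (Y' ω) (Z' ω) = 0) ∧
      eexp μ (fun ω => exPhi (X' ω) (Y' ω) (Z' ω)) = (0 : EReal) ∧
      (0 : EReal) < eexp μ (fun ω => exPhi (X ω) (Y ω) (Z ω))) := by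
  classical
  -- uniform laws: a.e. membership facts
  have unif_ae : ∀ (T : Ω → ℝ), Measurable T →
      Measure.map T μ = volume.restrict (Set.Ioo (0:ℝ) 1) →
      ∀ᵐ ω ∂μ, T ω ∈ Set.Ioo (0:ℝ) 1 := by
    intro T hT hu
    have h1 : ∀ᵐ x ∂(Measure.map T μ), x ∈ Set.Ioo (0:ℝ) 1 := by
      rw [hu]; exact ae_restrict_mem measurableSet_Ioo
    exact (MeasureTheory.ae_map_iff hT.aemeasurable measurableSet_Ioo).mp h1
  have hXmem := unif_ae X hX hXu
  have hXhalf : ∀ᵐ ω ∂μ, X ω ≠ 2⁻¹ := by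
    have hms : MeasurableSet {x : ℝ | x ≠ 2⁻¹} := (measurableSet_singleton (2⁻¹:ℝ)).compl
    have h1 : ∀ᵐ x ∂(Measure.map X μ), x ≠ (2⁻¹:ℝ) := by
      rw [hXu, ae_iff]
      have hset : {x : ℝ | ¬ x ≠ 2⁻¹} = {(2⁻¹:ℝ)} := by ext x; simp
      rw [hset]
      refine le_antisymm (le_trans (Measure.restrict_apply_le _ _) ?_) zero_le
      simp
    exact (MeasureTheory.ae_map_iff hX.aemeasurable hms).mp h1
  -- Y = 1 - X a.s.
  have hXeq : X =ᵐ[μ] (fun ω => 1 - Y ω) := by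
    obtain ⟨V, f, g, hV, hf, hg, h1, h2⟩ := hXY
    have hcom : Comonotone μ X (fun ω => 1 - Y ω) := by
      refine ⟨V, f, fun t => 1 + g t, hV, hf, hg.const_add 1, h1, ?_⟩
      filter_upwards [h2] with ω h
      have : -Y ω = g (V ω) := h
      linarith
    have hlaw : Measure.map X μ = Measure.map (fun ω => 1 - Y ω) μ := by
      have : Measure.map (fun ω => 1 - Y ω) μ
          = Measure.map (fun x : ℝ => 1 - x) (Measure.map Y μ) :=
        (Measure.map_map (measurable_const.sub measurable_id) hY).symm
      rw [hXu, this, hYu, map_reflect]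
    exact comon_ae_eq hX (measurable_const.sub hY) hcom hlaw
  have hYeq : Y =ᵐ[μ] (fun ω => 1 - X ω) := by
    filter_upwards [hXeq] with ω h
    linarith
  -- Z = 1 - |1 - 2X| a.s.
  have habs_meas : Measurable (fun x : ℝ => |1 - 2*x|) :=
    (measurable_const.sub (measurable_const_mul 2)).abs
  have hZeq : Z =ᵐ[μ] (fun ω => 1 - |1 - 2 * X ω|) := by
    set W : Ω → ℝ := fun ω => (X ω)⁻¹ + (Y ω)⁻¹ with hWdef
    have hWm : Measurable W := hX.inv.add hY.inv
    set U : Ω → ℝ := fun ω => mfun (W ω) with hUdef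
    have hUm : Measurable U := (mfun_mono.measurable).comp hWm
    have hUeq : U =ᵐ[μ] (fun ω => |1 - 2 * X ω|) := by
      filter_upwards [hXmem, hYeq] with ω hm hy
      show mfun ((X ω)⁻¹ + (Y ω)⁻¹) = |1 - 2 * X ω|
      rw [hy]
      exact mfun_val hm
    obtain ⟨V, f, g, hV, hf, hg, h1, h2⟩ := hWZ
    have hcom : Comonotone μ U (fun ω => 1 - Z ω) := by
      refine ⟨V, fun t => mfun (f t), fun t => 1 + g t, hV, mfun_mono.comp hf,
        hg.const_add 1, ?_, ?_⟩
      · filter_upwards [h1] with ω h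
        show mfun (W ω) = mfun (f (V ω))
        rw [show W ω = f (V ω) from h]
      · filter_upwards [h2] with ω h
        have : -Z ω = g (V ω) := h
        linarith
    have hlaw : Measure.map U μ = Measure.map (fun ω => 1 - Z ω) μ := by
      have e1 : Measure.map U μ = Measure.map (fun ω => |1 - 2 * X ω|) μ :=
        Measure.map_congr hUeq
      have e2 : Measure.map (fun ω => |1 - 2 * X ω|) μ
          = Measure.map (fun x : ℝ => |1 - 2*x|) (Measure.map X μ) :=
        (Measure.map_map habs_meas hX).symm
      have e3 : Measure.map (fun ω => 1 - Z ω) μ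
          = Measure.map (fun x : ℝ => 1 - x) (Measure.map Z μ) :=
        (Measure.map_map (measurable_const.sub measurable_id) hZ).symm
      rw [e1, e2, e3, hXu, hZu, SupermodularEx.map_abs, map_reflect]
    have hfinal := comon_ae_eq hUm (measurable_const.sub hZ) hcom hlaw
    filter_upwards [hfinal, hUeq] with ω h1' h2'
    have : U ω = 1 - Z ω := h1'
    have h3 : U ω = |1 - 2 * X ω| := h2'
    linarith
  -- the value of φ along (X, Y, Z)
  have hphi : (fun ω => exPhi (X ω) (Y ω) (Z ω))
      =ᵐ[μ] (fun ω => (max (X ω) (1 - X ω))⁻¹) := by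
    filter_upwards [hXmem, hXhalf, hYeq, hZeq] with ω h1 h2 h3 h4
    rw [h3, h4]
    exact exPhi_val h1 h2
  have posPos : posPartInt μ (fun ω => exPhi (X ω) (Y ω) (Z ω))
      = ENNReal.ofReal (2 * Real.log 2) := by
    unfold posPartInt
    have e0 : ∫⁻ ω, ENNReal.ofReal (exPhi (X ω) (Y ω) (Z ω)) ∂μ
        = ∫⁻ ω, ENNReal.ofReal ((max (X ω) (1 - X ω))⁻¹) ∂μ := by
      apply lintegral_congr_ae
      filter_upwards [hphi] with ω h
      rw [show exPhi (X ω) (Y ω) (Z ω) = (max (X ω) (1 - X ω))⁻¹ from h]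
    have e1 : ∫⁻ ω, ENNReal.ofReal ((max (X ω) (1 - X ω))⁻¹) ∂μ
        = ∫⁻ x, ENNReal.ofReal ((max x (1-x))⁻¹) ∂(Measure.map X μ) :=
      (lintegral_map (ENNReal.measurable_ofReal.comp fmax_cont.measurable) hX).symm
    rw [e0, e1, hXu, lint_fmax]
  have posNeg : posPartInt μ (fun ω => -(exPhi (X ω) (Y ω) (Z ω))) = 0 := by
    unfold posPartInt
    have e0 : ∫⁻ ω, ENNReal.ofReal (-(exPhi (X ω) (Y ω) (Z ω))) ∂μ
        = ∫⁻ _, (0:ENNReal) ∂μ := by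
      apply lintegral_congr_ae
      filter_upwards [hphi] with ω h
      rw [show exPhi (X ω) (Y ω) (Z ω) = (max (X ω) (1 - X ω))⁻¹ from h]
      exact ENNReal.ofReal_eq_zero.mpr (neg_nonpos.mpr
        (inv_nonneg.mpr (le_trans (by norm_num) (fmax_half (X ω)))))
    rw [e0, lintegral_zero]
  have hval : eexp μ (fun ω => exPhi (X ω) (Y ω) (Z ω)) = ((2 * Real.log 2 : ℝ) : EReal) := by
    unfold eexp
    rw [posPos, posNeg, EReal.coe_ennreal_ofReal, EReal.coe_ennreal_zero, sub_zero,
      max_eq_left (mul_nonneg (by norm_num) (Real.log_nonneg one_le_two))]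
  have hsuper : Supermodular (fun v : Fin 3 → ℝ => exPhi (v 0) (v 1) (v 2)) := by
    intro x y
    have key : exPhi (x 0 ⊓ y 0) (x 1 ⊓ y 1) (x 2 ⊓ y 2)
        + exPhi (x 0 ⊔ y 0) (x 1 ⊔ y 1) (x 2 ⊔ y 2)
        = exPhi (x 0) (x 1) (x 2) + exPhi (y 0) (y 1) (y 2) := by
      unfold exPhi
      have h1 := pair_min_max (fun t => if 0 < t ∧ t < 1 then 1 / t else 0) (x 0) (y 0)
      have h2 := pair_min_max (fun t => if 0 < t ∧ t < 1 then 1 / t else 0) (x 1) (y 1)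
      have h3 := pair_min_max (fun t => if 0 < t ∧ t < 1 then 2 / t else 0) (x 2) (y 2)
      linarith
    simp only [Pi.inf_apply, Pi.sup_apply]
    exact le_of_eq key.symm
  refine ⟨hsuper, hval, ?_⟩
  intro X' Y' Z' hX' hY' hZ' hc1 hc2 hc3 hu1 hu2 hu3
  have hxy : X' =ᵐ[μ] Y' := comon_ae_eq hX' hY' hc1 (by rw [hu1, hu2])
  have hxz : X' =ᵐ[μ] Z' := comon_ae_eq hX' hZ' hc2 (by rw [hu1, hu3])
  have haephi : ∀ᵐ ω ∂μ, exPhi (X' ω) (Y' ω) (Z' ω) = 0 := by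
    filter_upwards [hxy, hxz] with ω h1 h2
    rw [← h1, ← h2]
    exact exPhi_diag _
  have hzero : eexp μ (fun ω => exPhi (X' ω) (Y' ω) (Z' ω)) = (0 : EReal) := by
    unfold eexp posPartInt
    have e0 : ∫⁻ ω, ENNReal.ofReal (exPhi (X' ω) (Y' ω) (Z' ω)) ∂μ = 0 := by
      rw [← lintegral_zero (μ := μ)]
      apply lintegral_congr_ae
      filter_upwards [haephi] with ω h
      rw [h]; simp
    have e1 : ∫⁻ ω, ENNReal.ofReal (-(exPhi (X' ω) (Y' ω) (Z' ω))) ∂μ = 0 := by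
      rw [← lintegral_zero (μ := μ)]
      apply lintegral_congr_ae
      filter_upwards [haephi] with ω h
      rw [h]; simp
    rw [e0, e1, EReal.coe_ennreal_zero, sub_zero]
  refine ⟨haephi, hzero, ?_⟩
  rw [hval]
  exact_mod_cast mul_pos (by norm_num : (0:ℝ) < 2) (Real.log_pos one_lt_two)
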